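/- arXiv:2208.02112 — 3 statements merged into one kernel-verified Lean document; each statement's English description precedes it below -/
import Mathlib

section
/- Let k ≥ 2, let G be a k-dicritical digraph and let (V_0, V_1) be a partition of V(G) into two nonempty parts such that |A(V_0, V_1)| ≤ k−1, where A(V_0, V_1) is the set of arcs from V_0 to V_1. Let V_0^* be the set of vertices of V_0 having an out-arc into V_1, and V_1^* the set of vertices of V_1 having an in-arc from V_0. Then there exists i ∈ {0,1} such that every (k−1)-dicolouring of G[V_i] uses exactly one colour on V_i^*, and every (k−1)-dicolouring of G[V_{1−i}] uses exactly k−1 colours on V_{1−i}^*. -/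
/-- A (simple) digraph: a finite vertex set (of naturals) together with a finite
set of arcs between distinct vertices. -/
structure FDigraph where
  verts : Finset ℕ
  arcs : Finset (ℕ × ℕ)
  wf : ∀ a ∈ arcs, a.1 ∈ verts ∧ a.2 ∈ verts ∧ a.1 ≠ a.2

namespace FDigraph

/-- Smart constructor: keeps only the legal arcs. -/
def mk' (V : Finset ℕ) (A : Finset (ℕ × ℕ)) : FDigraph where
  verts := V
  arcs := A.filter fun a => a.1 ∈ V ∧ a.2 ∈ V ∧ a.1 ≠ a.2
  wf := by
    intro a ha
    simp only [Finset.mem_filter] at ha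
    exact ha.2

/-- A directed cycle, given as its (nonempty, duplicate-free) list of vertices:
every cyclically consecutive pair is an arc. -/
def IsDicycle (G : FDigraph) (l : List ℕ) : Prop :=
  l ≠ [] ∧ l.Nodup ∧ ∀ p ∈ l.zip (l.rotate 1), p ∈ G.arcs

/-- A set of vertices is acyclic if it contains no directed cycle. -/
def AcyclicOn (G : FDigraph) (S : Set ℕ) : Prop :=
  ¬ ∃ l, G.IsDicycle l ∧ ∀ v ∈ l, v ∈ S

/-- A `k`-dicolouring: colours `0, …, k-1`, every colour class acyclic. -/
def IsDicolouring (G : FDigraph) (k : ℕ) (φ : ℕ → ℕ) : Prop :=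
  (∀ v ∈ G.verts, φ v < k) ∧ ∀ c, G.AcyclicOn {v | φ v = c}

/-- The dichromatic number. -/
noncomputable def dichi (G : FDigraph) : ℕ := sInf {k | ∃ φ, G.IsDicolouring k φ}

/-- Subdigraph relation. -/
def Subdigraph (H G : FDigraph) : Prop := H.verts ⊆ G.verts ∧ H.arcs ⊆ G.arcs

/-- `G` is `k`-dicritical. -/
def Dicritical (G : FDigraph) (k : ℕ) : Prop :=
  G.dichi = k ∧ ∀ H, Subdigraph H G → H ≠ G → H.dichi ≤ k - 1

/-- Induced subdigraph on a finite set of vertices. -/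
def induce (G : FDigraph) (S : Finset ℕ) : FDigraph := mk' (G.verts ∩ S) G.arcs

def outDeg (G : FDigraph) (v : ℕ) : ℕ := (G.arcs.filter fun a => a.1 = v).card
def inDeg (G : FDigraph) (v : ℕ) : ℕ := (G.arcs.filter fun a => a.2 = v).card
def deg (G : FDigraph) (v : ℕ) : ℕ := G.outDeg v + G.inDeg v

/-- Weak adjacency: an arc in either direction. -/
def wadj (G : FDigraph) (u v : ℕ) : Prop := (u, v) ∈ G.arcs ∨ (v, u) ∈ G.arcs

/-- Weak reachability. -/
def WReach (G : FDigraph) : ℕ → ℕ → Prop := Relation.ReflTransGen G.wadj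

/-- A digraph is connected when its underlying graph is connected
(the empty digraph counts as connected). -/
def Connected (G : FDigraph) : Prop := ∀ u ∈ G.verts, ∀ v ∈ G.verts, G.WReach u v

/-- The set of connected components. -/
def components (G : FDigraph) : Set (Set ℕ) :=
  {C | ∃ v ∈ G.verts, C = {u | u ∈ G.verts ∧ G.WReach v u}}

/-- The number of connected components. -/
noncomputable def numComponents (G : FDigraph) : ℕ := G.components.ncard

/-- Isomorphism of digraphs. -/
def Iso (G H : FDigraph) : Prop :=
  ∃ f : ℕ → ℕ, Set.BijOn f ↑G.verts ↑H.verts ∧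
    ∀ u ∈ G.verts, ∀ v ∈ G.verts, ((u, v) ∈ G.arcs ↔ (f u, f v) ∈ H.arcs)

/-- The bidirected (complete) digraph `↔K_n`. -/
def completeD (n : ℕ) : FDigraph := mk' (Finset.range n) (Finset.range n ×ˢ Finset.range n)

/-- The directed cycle `C⃗_n`. -/
def dirCycle (n : ℕ) : FDigraph :=
  mk' (Finset.range n)
    ((Finset.range n ×ˢ Finset.range n).filter fun a => a.2 = (a.1 + 1) % n)

/-- The bidirected cycle `↔C_n`. -/
def biCycle (n : ℕ) : FDigraph :=
  mk' (Finset.range n)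
    ((Finset.range n ×ˢ Finset.range n).filter fun a =>
      a.2 = (a.1 + 1) % n ∨ a.1 = (a.2 + 1) % n)

/-- The Dirac join of `↔K_{k-2}` (on `{0,…,k-3}`) and the directed triangle
`C⃗_3` (on `{k-2, k-1, k}`). -/
def diracJoinExample (k : ℕ) : FDigraph :=
  mk' (Finset.range (k + 1))
    ((Finset.range (k + 1) ×ˢ Finset.range (k + 1)).filter fun a =>
      a.1 < k - 2 ∨ a.2 < k - 2 ∨ a.2 = (if a.1 = k then k - 2 else a.1 + 1))

end FDigraph

namespace FDigraph

lemma dicycle_mem_verts {G : FDigraph} {l : List ℕ} (h : G.IsDicycle l) :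
    ∀ v ∈ l, v ∈ G.verts := by
  obtain ⟨hne, hnd, harcs⟩ := h
  intro v hv
  obtain ⟨i, hi, rfl⟩ := List.mem_iff_getElem.mp hv
  have hlen : (l.rotate 1).length = l.length := List.length_rotate l 1
  have hz : i < (l.zip (l.rotate 1)).length := by
    rw [List.length_zip, hlen]; omega
  have hpair : (l.zip (l.rotate 1))[i] ∈ l.zip (l.rotate 1) := List.getElem_mem hz
  rw [List.getElem_zip] at hpair
  exact (G.wf _ (harcs _ hpair)).1

lemma not_dicycle_const {G : FDigraph} {l : List ℕ} (h : G.IsDicycle l) {c : ℕ}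
    (hall : ∀ v ∈ l, v = c) : False := by
  obtain ⟨hne, hnd, harcs⟩ := h
  match l, hne with
  | a :: t, _ =>
    have ha : a = c := hall a (by simp)
    have ht : t = [] := by
      cases t with
      | nil => rfl
      | cons b s =>
        exfalso
        have hb : b = c := hall b (by simp)
        have : a ∉ b :: s := (List.nodup_cons.mp hnd).1
        exact this (by simp [ha, hb])
    subst ht ha
    have : (a, a) ∈ [a].zip ([a].rotate 1) := by simp [List.rotate]
    exact (G.wf _ (harcs _ this)).2.2 rfl

lemma exists_dicolouring (H : FDigraph) : ∃ n φ, H.IsDicolouring n φ := by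
  refine ⟨H.verts.sup id + 1, id, fun v hv => Nat.lt_succ_of_le (Finset.le_sup (f := id) hv), ?_⟩
  rintro c ⟨l, hl, hmem⟩
  exact not_dicycle_const hl fun v hv => hmem v hv

lemma IsDicolouring.mono {H : FDigraph} {m n : ℕ} {φ : ℕ → ℕ}
    (h : H.IsDicolouring m φ) (hmn : m ≤ n) : H.IsDicolouring n φ :=
  ⟨fun v hv => lt_of_lt_of_le (h.1 v hv) hmn, h.2⟩

lemma exists_dicolouring_of_dichi_le {H : FDigraph} {m : ℕ} (h : H.dichi ≤ m) :
    ∃ φ, H.IsDicolouring m φ := by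
  have hne : {n | ∃ φ, H.IsDicolouring n φ}.Nonempty := by
    obtain ⟨n, φ, hφ⟩ := exists_dicolouring H
    exact ⟨n, φ, hφ⟩
  obtain ⟨φ, hφ⟩ := Nat.sInf_mem hne
  exact ⟨φ, hφ.mono h⟩

lemma dichi_le_of_dicolouring {H : FDigraph} {m : ℕ} {φ : ℕ → ℕ}
    (h : H.IsDicolouring m φ) : H.dichi ≤ m := Nat.sInf_le ⟨φ, h⟩

/-- If a cyclic sequence meets both `V0` and its complement, some consecutive
pair crosses from `V0` to the complement. -/
lemma getElem_idx_congr {l : List ℕ} {i j : ℕ} (h : i = j) (hi : i < l.length) :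
    l[i]'hi = l[j]'(h ▸ hi) := by subst h; rfl

lemma exists_crossing {l : List ℕ} (hne : l ≠ []) (V0 : Finset ℕ)
    {u w : ℕ} (hu : u ∈ l) (hu0 : u ∈ V0) (hw : w ∈ l) (hw0 : w ∉ V0) :
    ∃ p ∈ l.zip (l.rotate 1), p.1 ∈ V0 ∧ p.2 ∉ V0 := by
  by_contra hcon
  push_neg at hcon
  have hn : 0 < l.length := List.length_pos_iff.mpr hne
  have hlen : (l.rotate 1).length = l.length := List.length_rotate l 1
  obtain ⟨i0, hi0, hu0'⟩ := List.mem_iff_getElem.mp hu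
  have key : ∀ t : ℕ, l[(i0 + t) % l.length]'(Nat.mod_lt _ hn) ∈ V0 := by
    intro t
    induction t with
    | zero =>
      have h2 : (i0 + 0) % l.length = i0 := by
        simp [Nat.mod_eq_of_lt hi0]
      rw [getElem_idx_congr h2, hu0']
      exact hu0
    | succ t ih =>
      set m := (i0 + t) % l.length with hm
      have hmlt : m < l.length := Nat.mod_lt _ hn
      have hz : m < (l.zip (l.rotate 1)).length := by
        rw [List.length_zip, hlen]; omega
      have hpair : (l.zip (l.rotate 1))[m] ∈ l.zip (l.rotate 1) := List.getElem_mem hz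
      rw [List.getElem_zip] at hpair
      have hstep := hcon _ hpair ih
      rw [List.getElem_rotate] at hstep
      have heq : (m + 1) % l.length = (i0 + (t + 1)) % l.length := by
        rw [hm, Nat.mod_add_mod, ← Nat.add_assoc]
      rw [getElem_idx_congr heq.symm]
      exact hstep
  obtain ⟨j, hj, hw'⟩ := List.mem_iff_getElem.mp hw
  have := key (l.length + j - i0)
  have heq : (i0 + (l.length + j - i0)) % l.length = j := by
    have h1 : i0 + (l.length + j - i0) = l.length + j := by omega
    rw [h1, Nat.add_mod_left, Nat.mod_eq_of_lt hj]
  rw [getElem_idx_congr heq] at this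
  exact hw0 (hw' ▸ this)

lemma induce_verts (G : FDigraph) (S : Finset ℕ) : (G.induce S).verts = G.verts ∩ S := rfl

lemma induce_arcs_mem {G : FDigraph} {S : Finset ℕ} {a : ℕ × ℕ} :
    a ∈ (G.induce S).arcs ↔ a ∈ G.arcs ∧ a.1 ∈ G.verts ∩ S ∧ a.2 ∈ G.verts ∩ S ∧ a.1 ≠ a.2 := by
  simp [induce, mk', Finset.mem_filter]

/-- Combining dicolourings of the two sides, recolouring `V1` through `σ`,
when `σ` avoids all conflicts on the cut arcs. -/
lemma combine_colouring {k : ℕ} {G : FDigraph} {V0 V1 : Finset ℕ}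
    (hunion : V0 ∪ V1 = G.verts) {φ0 φ1 σ : ℕ → ℕ}
    (h0 : (G.induce V0).IsDicolouring (k - 1) φ0)
    (h1 : (G.induce V1).IsDicolouring (k - 1) φ1)
    (hσlt : ∀ n < k - 1, σ n < k - 1) (hσinj : Set.InjOn σ {n | n < k - 1})
    (hnoc : ∀ a ∈ G.arcs, a.1 ∈ V0 → a.2 ∈ V1 → φ0 a.1 ≠ σ (φ1 a.2)) :
    G.IsDicolouring (k - 1) (fun v => if v ∈ V0 then φ0 v else σ (φ1 v)) := by
  classical
  have hmem0 : ∀ v ∈ G.verts, v ∈ V0 → φ0 v < k - 1 := by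
    intro v hv hv0
    exact h0.1 v (by rw [induce_verts]; exact Finset.mem_inter.mpr ⟨hv, hv0⟩)
  have hmem1 : ∀ v ∈ G.verts, v ∈ V1 → φ1 v < k - 1 := by
    intro v hv hv1
    exact h1.1 v (by rw [induce_verts]; exact Finset.mem_inter.mpr ⟨hv, hv1⟩)
  have hV1 : ∀ v ∈ G.verts, v ∉ V0 → v ∈ V1 := by
    intro v hv hv0
    have : v ∈ V0 ∪ V1 := hunion ▸ hv
    rcases Finset.mem_union.mp this with h | h
    · exact absurd h hv0
    · exact h
  constructor
  · intro v hv
    by_cases hv0 : v ∈ V0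
    · simpa [hv0] using hmem0 v hv hv0
    · simp only [hv0, if_false]
      exact hσlt _ (hmem1 v hv (hV1 v hv hv0))
  · rintro c ⟨l, hl, hcol⟩
    have hverts : ∀ v ∈ l, v ∈ G.verts := dicycle_mem_verts hl
    obtain ⟨hlne, hlnd, hlarcs⟩ := hl
    by_cases hA : ∀ v ∈ l, v ∈ V0
    · -- cycle inside V0
      refine h0.2 c ⟨l, ⟨hlne, hlnd, ?_⟩, ?_⟩
      · intro p hp
        have hpa := hlarcs p hp
        obtain ⟨hp1, hp2⟩ := List.of_mem_zip hp
        rw [List.mem_rotate] at hp2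
        refine induce_arcs_mem.mpr ⟨hpa, ?_, ?_, (G.wf _ hpa).2.2⟩
        · exact Finset.mem_inter.mpr ⟨hverts _ hp1, hA _ hp1⟩
        · exact Finset.mem_inter.mpr ⟨hverts _ hp2, hA _ hp2⟩
      · intro v hv
        have := hcol v hv
        simpa [hA v hv] using this
    · push_neg at hA
      obtain ⟨w, hwl, hw0⟩ := hA
      by_cases hB : ∃ u ∈ l, u ∈ V0
      · -- crossing
        obtain ⟨u, hul, hu0⟩ := hB
        obtain ⟨p, hp, hp0, hp1⟩ := exists_crossing hlne V0 hul hu0 hwl hw0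
        have hpa := hlarcs p hp
        obtain ⟨hpl1, hpl2⟩ := List.of_mem_zip (a := p.1) (b := p.2) (by simpa using hp)
        rw [List.mem_rotate] at hpl2
        have hp2V1 : p.2 ∈ V1 := hV1 _ (hverts _ hpl2) hp1
        have hc1 : φ0 p.1 = c := by simpa [hp0] using hcol _ hpl1
        have hc2 : σ (φ1 p.2) = c := by simpa [hp1] using hcol _ hpl2
        exact hnoc p hpa hp0 hp2V1 (hc1.trans hc2.symm)
      · -- cycle inside V1
        push_neg at hB
        have hBV1 : ∀ v ∈ l, v ∈ V1 := fun v hv => hV1 v (hverts v hv) (hB v hv)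
        obtain ⟨v0, hv0l⟩ := List.exists_mem_of_ne_nil l hlne
        refine h1.2 (φ1 v0) ⟨l, ⟨hlne, hlnd, ?_⟩, ?_⟩
        · intro p hp
          have hpa := hlarcs p hp
          obtain ⟨hp1, hp2⟩ := List.of_mem_zip hp
          rw [List.mem_rotate] at hp2
          refine induce_arcs_mem.mpr ⟨hpa, ?_, ?_, (G.wf _ hpa).2.2⟩
          · exact Finset.mem_inter.mpr ⟨hverts _ hp1, hBV1 _ hp1⟩
          · exact Finset.mem_inter.mpr ⟨hverts _ hp2, hBV1 _ hp2⟩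
        · intro v hv
          have hcv : σ (φ1 v) = c := by simpa [hB v hv] using hcol v hv
          have hcv0 : σ (φ1 v0) = c := by simpa [hB v0 hv0l] using hcol v0 hv0l
          exact hσinj (hmem1 v (hverts v hv) (hBV1 v hv))
            (hmem1 v0 (hverts v0 hv0l) (hBV1 v0 hv0l)) (hcv.trans hcv0.symm)

lemma two_mul_ge {a b : ℕ} (ha : 2 ≤ a) (hb : 2 ≤ b) : a + b ≤ a * b := by
  obtain ⟨a', rfl⟩ : ∃ a', a = a' + 2 := ⟨a - 2, by omega⟩
  obtain ⟨b', rfl⟩ : ∃ b', b = b' + 2 := ⟨b - 2, by omega⟩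
  nlinarith

/-- The combinatorial core: if the conflict pattern `P` (at most `k-1` cells in
a `(k-1) × (k-1)` grid) is not a full row or a full column, then there is an
injection of the colours avoiding all of `P`. -/
lemma exists_avoiding (k : ℕ) (P : Finset (ℕ × ℕ))
    (hPsub : ∀ p ∈ P, p.1 < k - 1 ∧ p.2 < k - 1) (hPcard : P.card ≤ k - 1)
    (hno : ¬ ((((P.image Prod.fst).card = 1 ∧ (P.image Prod.snd).card = k - 1)) ∨
        (((P.image Prod.fst).card = k - 1 ∧ (P.image Prod.snd).card = 1)))) :
    ∃ σ : ℕ → ℕ, (∀ n < k - 1, σ n < k - 1) ∧ Set.InjOn σ {n | n < k - 1} ∧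
      ∀ p ∈ P, p.1 ≠ σ p.2 := by
  classical
  set t : Fin (k - 1) → Finset ℕ :=
    fun b => (Finset.range (k - 1)).filter (fun a => (a, (b : ℕ)) ∉ P) with ht
  have hall : ∀ s : Finset (Fin (k - 1)), s.card ≤ (s.biUnion t).card := by
    intro s
    set X : Finset ℕ :=
      (Finset.range (k - 1)).filter (fun a => ∀ b ∈ s, (a, (b : ℕ)) ∈ P) with hX
    have hXsub : X ⊆ Finset.range (k - 1) := Finset.filter_subset _ _
    have hbiu : s.biUnion t = Finset.range (k - 1) \ X := by
      ext a
      simp only [Finset.mem_biUnion, ht, Finset.mem_filter, Finset.mem_sdiff, hX,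
        Finset.mem_range]
      constructor
      · rintro ⟨b, hb, halt, hnp⟩
        exact ⟨halt, fun h => hnp (h.2 b hb)⟩
      · rintro ⟨halt, hnall⟩
        by_contra hc
        push_neg at hc
        exact hnall ⟨halt, fun b hb => hc b hb halt⟩
    have hsum : s.card + X.card ≤ k - 1 := by
      by_contra hge
      push_neg at hge
      -- so s.card + X.card ≥ k  (well, > k-1)
      have hxk0 : X.card ≤ k - 1 := by
        simpa [Finset.card_range] using Finset.card_le_card hXsub
      have hsk0 : s.card ≤ k - 1 := by
        simpa [Fintype.card_fin] using Finset.card_le_univ s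
      have hs1 : 1 ≤ s.card := by omega
      have hx1 : 1 ≤ X.card := by omega
      set S : Finset ℕ := s.image (Fin.val : Fin (k - 1) → ℕ) with hS
      have hScard : S.card = s.card := by
        rw [hS]
        exact Finset.card_image_of_injective _ Fin.val_injective
      have hprod : X ×ˢ S ⊆ P := by
        rintro ⟨a, b⟩ hab
        rw [Finset.mem_product] at hab
        obtain ⟨haX, hbS⟩ := hab
        rw [hS, Finset.mem_image] at hbS
        obtain ⟨b', hb', rfl⟩ := hbS
        exact (Finset.mem_filter.mp haX).2 b' hb'
      have hPge : X.card * S.card ≤ P.card := by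
        have := Finset.card_le_card hprod
        rwa [Finset.card_product] at this
      have hxk : X.card ≤ k - 1 := by
        have := Finset.card_le_card hXsub
        simpa [Finset.card_range] using this
      have hsk : s.card ≤ k - 1 := by
        have := Finset.card_le_univ s
        simpa [Fintype.card_fin] using this
      -- cardinalities force a full row or a full column
      have hcases : (X.card = 1 ∧ S.card = k - 1) ∨ (X.card = k - 1 ∧ S.card = 1) := by
        rw [hScard]
        rcases Nat.lt_or_ge X.card 2 with hx2 | hx2
        · left
          omega
        · rcases Nat.lt_or_ge s.card 2 with hs2 | hs2
          · right
            have : X.card * s.card ≤ k - 1 := by rw [← hScard]; omega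
            omega
          · exfalso
            have := two_mul_ge hx2 hs2
            have : X.card * s.card ≤ k - 1 := by rw [← hScard]; omega
            omega
      have hPeq : P = X ×ˢ S := by
        refine (Finset.eq_of_subset_of_card_le hprod ?_).symm
        rw [Finset.card_product]
        rcases hcases with ⟨h1, h2⟩ | ⟨h1, h2⟩ <;> rw [h1, h2] <;> omega
      have hSne : S.Nonempty := by
        rw [← Finset.card_pos, hScard]; omega
      have hXne : X.Nonempty := by rw [← Finset.card_pos]; omega
      have hfst : P.image Prod.fst = X := by
        rw [hPeq]
        ext a
        simp only [Finset.mem_image, Finset.mem_product, Prod.exists]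
        constructor
        · rintro ⟨x, y, ⟨hx, _⟩, rfl⟩; exact hx
        · intro hx
          obtain ⟨b, hb⟩ := hSne
          exact ⟨a, b, ⟨hx, hb⟩, rfl⟩
      have hsnd : P.image Prod.snd = S := by
        rw [hPeq]
        ext b
        simp only [Finset.mem_image, Finset.mem_product, Prod.exists]
        constructor
        · rintro ⟨x, y, ⟨_, hy⟩, rfl⟩; exact hy
        · intro hy
          obtain ⟨a, ha⟩ := hXne
          exact ⟨a, b, ⟨ha, hy⟩, rfl⟩
      exact hno (by
        rw [hfst, hsnd]
        rcases hcases with ⟨h1, h2⟩ | ⟨h1, h2⟩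
        · exact Or.inl ⟨h1, h2⟩
        · exact Or.inr ⟨h1, h2⟩)
    calc s.card ≤ (k - 1) - X.card := by omega
      _ = (Finset.range (k - 1) \ X).card := by
          rw [Finset.card_sdiff_of_subset hXsub, Finset.card_range]
      _ = (s.biUnion t).card := by rw [hbiu]
  obtain ⟨f, hfinj, hft⟩ := (Finset.all_card_le_biUnion_card_iff_exists_injective t).mp hall
  refine ⟨fun n => if h : n < k - 1 then f ⟨n, h⟩ else n, ?_, ?_, ?_⟩
  · intro n hn
    simp only [dif_pos hn]
    have := hft ⟨n, hn⟩
    rw [ht, Finset.mem_filter, Finset.mem_range] at this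
    exact this.1
  · intro m hm n hn heq
    simp only [Set.mem_setOf_eq] at hm hn
    simp only [dif_pos hm, dif_pos hn] at heq
    exact congrArg Fin.val (hfinj heq)
  · rintro ⟨a, b⟩ hp heq
    have hb : b < k - 1 := (hPsub _ hp).2
    simp only [dif_pos hb] at heq
    have := hft ⟨b, hb⟩
    rw [ht, Finset.mem_filter] at this
    exact this.2 (heq ▸ hp)

open Classical in
/-- The core pairwise lemma. -/
lemma pair_lemma (k : ℕ) (hk : 2 ≤ k) (G : FDigraph) (hG : G.Dicritical k)
    (V0 V1 : Finset ℕ) (hunion : V0 ∪ V1 = G.verts) (hdisj : Disjoint V0 V1)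
    (hcut : (G.arcs.filter fun a => a.1 ∈ V0 ∧ a.2 ∈ V1).card ≤ k - 1)
    {φ0 φ1 : ℕ → ℕ} (h0 : (G.induce V0).IsDicolouring (k - 1) φ0)
    (h1 : (G.induce V1).IsDicolouring (k - 1) φ1) :
    (((V0.filter fun u => ∃ v ∈ V1, (u, v) ∈ G.arcs).image φ0).card = 1 ∧
      ((V1.filter fun v => ∃ u ∈ V0, (u, v) ∈ G.arcs).image φ1).card = k - 1) ∨
    (((V0.filter fun u => ∃ v ∈ V1, (u, v) ∈ G.arcs).image φ0).card = k - 1 ∧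
      ((V1.filter fun v => ∃ u ∈ V0, (u, v) ∈ G.arcs).image φ1).card = 1) := by
  classical
  set F : Finset (ℕ × ℕ) := G.arcs.filter (fun a => a.1 ∈ V0 ∧ a.2 ∈ V1) with hF
  set P : Finset (ℕ × ℕ) := F.image (fun a => (φ0 a.1, φ1 a.2)) with hP
  have hV0sub : V0 ⊆ G.verts := by
    intro v hv; rw [← hunion]; exact Finset.mem_union_left _ hv
  have hV1sub : V1 ⊆ G.verts := by
    intro v hv; rw [← hunion]; exact Finset.mem_union_right _ hv
  have hPsub : ∀ p ∈ P, p.1 < k - 1 ∧ p.2 < k - 1 := by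
    rintro p hp
    rw [hP, Finset.mem_image] at hp
    obtain ⟨a, ha, rfl⟩ := hp
    rw [hF, Finset.mem_filter] at ha
    obtain ⟨haarc, ha0, ha1⟩ := ha
    constructor
    · exact h0.1 _ (by rw [induce_verts]; exact Finset.mem_inter.mpr ⟨hV0sub ha0, ha0⟩)
    · exact h1.1 _ (by rw [induce_verts]; exact Finset.mem_inter.mpr ⟨hV1sub ha1, ha1⟩)
  have hPcard : P.card ≤ k - 1 := le_trans (Finset.card_image_le) hcut
  have hfst : P.image Prod.fst = (V0.filter fun u => ∃ v ∈ V1, (u, v) ∈ G.arcs).image φ0 := by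
    ext c
    simp only [hP, hF, Finset.mem_image, Finset.mem_filter]
    constructor
    · rintro ⟨p, ⟨a, ⟨harc, ha0, ha1⟩, rfl⟩, rfl⟩
      exact ⟨a.1, ⟨ha0, a.2, ha1, harc⟩, rfl⟩
    · rintro ⟨u, ⟨hu0, v, hv1, harc⟩, rfl⟩
      exact ⟨(φ0 u, φ1 v), ⟨(u, v), ⟨harc, hu0, hv1⟩, rfl⟩, rfl⟩
  have hsnd : P.image Prod.snd = (V1.filter fun v => ∃ u ∈ V0, (u, v) ∈ G.arcs).image φ1 := by
    ext c
    simp only [hP, hF, Finset.mem_image, Finset.mem_filter]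
    constructor
    · rintro ⟨p, ⟨a, ⟨harc, ha0, ha1⟩, rfl⟩, rfl⟩
      exact ⟨a.2, ⟨ha1, a.1, ha0, harc⟩, rfl⟩
    · rintro ⟨v, ⟨hv1, u, hu0, harc⟩, rfl⟩
      exact ⟨(φ0 u, φ1 v), ⟨(u, v), ⟨harc, hu0, hv1⟩, rfl⟩, rfl⟩
  rw [← hfst, ← hsnd]
  by_contra hno
  obtain ⟨σ, hσlt, hσinj, hσav⟩ := exists_avoiding k P hPsub hPcard hno
  have hnoc : ∀ a ∈ G.arcs, a.1 ∈ V0 → a.2 ∈ V1 → φ0 a.1 ≠ σ (φ1 a.2) := by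
    intro a ha ha0 ha1
    exact hσav (φ0 a.1, φ1 a.2)
      (Finset.mem_image_of_mem _ (Finset.mem_filter.mpr ⟨ha, ha0, ha1⟩))
  have hcol := combine_colouring hunion h0 h1 hσlt hσinj hnoc
  have := dichi_le_of_dicolouring hcol
  rw [hG.1] at this
  omega

end FDigraph

open Classical in
/-- for a partition `(V₀, V₁)` of a `k`-dicritical digraph with at
most `k-1` arcs from `V₀` to `V₁`, on one side every `(k-1)`-dicolouring uses one
colour on the boundary, and on the other side every `(k-1)`-dicolouring uses
`k-1` colours on the boundary. -/
theorem boundary_colours (k : ℕ) (hk : 2 ≤ k) (G : FDigraph) (hG : G.Dicritical k)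
    (V0 V1 : Finset ℕ) (hunion : V0 ∪ V1 = G.verts) (hdisj : Disjoint V0 V1)
    (h0 : V0.Nonempty) (h1 : V1.Nonempty)
    (hcut : (G.arcs.filter fun a => a.1 ∈ V0 ∧ a.2 ∈ V1).card ≤ k - 1) :
    ((∀ φ : ℕ → ℕ, (G.induce V0).IsDicolouring (k - 1) φ →
        ((V0.filter fun u => ∃ v ∈ V1, (u, v) ∈ G.arcs).image φ).card = 1) ∧
      (∀ φ : ℕ → ℕ, (G.induce V1).IsDicolouring (k - 1) φ →
        ((V1.filter fun v => ∃ u ∈ V0, (u, v) ∈ G.arcs).image φ).card = k - 1)) ∨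
    ((∀ φ : ℕ → ℕ, (G.induce V1).IsDicolouring (k - 1) φ →
        ((V1.filter fun v => ∃ u ∈ V0, (u, v) ∈ G.arcs).image φ).card = 1) ∧
      (∀ φ : ℕ → ℕ, (G.induce V0).IsDicolouring (k - 1) φ →
        ((V0.filter fun u => ∃ v ∈ V1, (u, v) ∈ G.arcs).image φ).card = k - 1)) := by
  classical
  have hV0sub : V0 ⊆ G.verts := fun v hv => hunion ▸ Finset.mem_union_left _ hv
  have hV1sub : V1 ⊆ G.verts := fun v hv => hunion ▸ Finset.mem_union_right _ hv
  have hd0 : (G.induce V0).dichi ≤ k - 1 := by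
    apply hG.2 _ ⟨Finset.inter_subset_left, Finset.filter_subset _ _⟩
    intro heq
    obtain ⟨v, hv⟩ := h1
    have hvv : v ∈ (G.induce V0).verts := by rw [heq]; exact hV1sub hv
    rw [FDigraph.induce_verts, Finset.mem_inter] at hvv
    exact Finset.disjoint_left.mp hdisj hvv.2 hv
  have hd1 : (G.induce V1).dichi ≤ k - 1 := by
    apply hG.2 _ ⟨Finset.inter_subset_left, Finset.filter_subset _ _⟩
    intro heq
    obtain ⟨v, hv⟩ := h0
    have hvv : v ∈ (G.induce V1).verts := by rw [heq]; exact hV0sub hv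
    rw [FDigraph.induce_verts, Finset.mem_inter] at hvv
    exact Finset.disjoint_left.mp hdisj hv hvv.2
  obtain ⟨φ0e, hφ0e⟩ := FDigraph.exists_dicolouring_of_dichi_le hd0
  obtain ⟨φ1e, hφ1e⟩ := FDigraph.exists_dicolouring_of_dichi_le hd1
  rcases FDigraph.pair_lemma k hk G hG V0 V1 hunion hdisj hcut hφ0e hφ1e with
    ⟨hc0, hc1⟩ | ⟨hc0, hc1⟩
  · left
    constructor
    · intro φ hφ
      rcases FDigraph.pair_lemma k hk G hG V0 V1 hunion hdisj hcut hφ hφ1e with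
        ⟨h, _⟩ | ⟨h, h'⟩
      · exact h
      · omega
    · intro φ hφ
      rcases FDigraph.pair_lemma k hk G hG V0 V1 hunion hdisj hcut hφ0e hφ with
        ⟨_, h⟩ | ⟨h', h⟩
      · exact h
      · omega
  · right
    constructor
    · intro φ hφ
      rcases FDigraph.pair_lemma k hk G hG V0 V1 hunion hdisj hcut hφ0e hφ with
        ⟨_, h⟩ | ⟨h', h⟩
      · omega
      · exact h
    · intro φ hφ
      rcases FDigraph.pair_lemma k hk G hG V0 V1 hunion hdisj hcut hφ hφ1e with
        ⟨h, h'⟩ | ⟨h, _⟩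
      · omega
      · exact h
end

section
/- Let k ≥ 2 and let G be a k-dicritical digraph. Then G is (k−1)-arc-connected: for every set A' of arcs of G with |A'| ≤ k−2, the digraph obtained from G by deleting the arcs of A' is strongly connected. Equivalently, for every partition (V_0, V_1) of V(G) into two nonempty parts, there are at least k−1 arcs from V_0 to V_1. -/
namespace FDigraph

/-- Strong connectivity. -/
def StronglyConnected (G : FDigraph) : Prop :=
  ∀ u ∈ G.verts, ∀ v ∈ G.verts, Relation.ReflTransGen (fun a b => (a, b) ∈ G.arcs) u v

/-- Deleting a set of arcs. -/
def removeArcs (G : FDigraph) (A : Finset (ℕ × ℕ)) : FDigraph where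
  verts := G.verts
  arcs := G.arcs \ A
  wf := fun a ha => G.wf a (Finset.mem_sdiff.mp ha).1

end FDigraph

/-!
If some cut `(V₀, V₁)` had fewer than `k - 1` arcs from `V₀` to `V₁`, criticality would give
`(k-1)`-dicolourings of `G[V₀]` and `G[V₁]`. Each of those few arcs is monochromatic for at most
one of the `k - 1` cyclic rotations of the colours on `V₁`, so some rotation makes all of them
bichromatic. A directed cycle meeting both sides leaves `V₀` along an arc into `V₁`, so the two
colourings together `(k-1)`-dicolour `G`, a contradiction. Arc-connectivity follows by taking for
`V₀` the vertices reachable from a fixed vertex once the arcs are deleted.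
-/

theorem List.exists_mem_zip_rotate_one_fst_eq {α : Type*} {l : List α} {v : α} (hv : v ∈ l) :
    ∃ w, (v, w) ∈ l.zip (l.rotate 1) := by
  have hv' : v ∈ (l.zip (l.rotate 1)).map Prod.fst := by rwa [List.map_fst_zip (by simp)]
  obtain ⟨⟨_, w⟩, hp, rfl⟩ := List.mem_map.1 hv'
  exact ⟨w, hp⟩

theorem List.exists_mem_zip_rotate_one_fst_mem_snd_notMem {α : Type*} {l : List α} {S : Set α}
    {u v : α} (hu : u ∈ l) (huS : u ∈ S) (hv : v ∈ l) (hvS : v ∉ S) :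
    ∃ p ∈ l.zip (l.rotate 1), p.1 ∈ S ∧ p.2 ∉ S := by
  cases l with
  | nil => simp at hu
  | cons a t =>
    set r : α → α → Prop := fun x y => (x, y) ∈ (a :: t).zip ((a :: t).rotate 1)
    have hchain : List.IsChain r (a :: t ++ [a]) := by
      rw [List.isChain_cons_append_singleton_iff_forall₂, List.forall₂_iff_zip]
      simp [r]
    by_contra! hclosed
    by_cases ha : a ∈ S
    · exact hvS (hchain.induction (· ∈ S) _ (fun x y hxy hx => hclosed (x, y) hxy hx)
        (fun _ => ha) v (List.mem_append_left _ hv))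
    · exact hchain.backwards_induction (· ∉ S) _
        (fun x y hxy hy hx => hy (hclosed (x, y) hxy hx)) (fun _ => by simpa using ha) u
        (List.mem_append_left _ hu) huS

theorem Nat.exists_lt_forall_add_mod_ne {ι : Type*} (C : Finset ι) (x y : ι → ℕ) {m : ℕ}
    (hC : C.card < m) : ∃ s < m, ∀ i ∈ C, (y i + s) % m ≠ x i := by
  classical
  set bad := C.biUnion fun i => (Finset.range m).filter fun s => (y i + s) % m = x i
  have hbad : bad.card < (Finset.range m).card := by
    refine lt_of_le_of_lt (Finset.card_biUnion_le_card_mul _ _ 1 fun i _ => ?_) (by simpa)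
    refine Finset.card_le_one.2 fun s hs t ht => ?_
    simp only [Finset.mem_filter, Finset.mem_range] at hs ht
    exact (Nat.ModEq.add_left_cancel' (y i) (hs.2.trans ht.2.symm)).eq_of_lt_of_lt hs.1 ht.1
  obtain ⟨s, hs, hsbad⟩ := Finset.exists_mem_notMem_of_card_lt_card hbad
  refine ⟨s, Finset.mem_range.1 hs, fun i hi hsi => hsbad ?_⟩
  exact Finset.mem_biUnion.2 ⟨i, hi, Finset.mem_filter.2 ⟨hs, hsi⟩⟩

namespace FDigraph

def arcsBetween (G : FDigraph) (V0 V1 : Finset ℕ) : Finset (ℕ × ℕ) :=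
  G.arcs.filter fun a => a.1 ∈ V0 ∧ a.2 ∈ V1

theorem mem_right_of_notMem_left {G : FDigraph} {V0 V1 : Finset ℕ} (hV : V0 ∪ V1 = G.verts)
    {v : ℕ} (hv : v ∈ G.verts) (hv0 : v ∉ V0) : v ∈ V1 :=
  (Finset.mem_union.1 (hV ▸ hv)).resolve_left hv0

namespace IsDicycle

variable {G : FDigraph} {l : List ℕ}

theorem mem_verts (h : G.IsDicycle l) {v : ℕ} (hv : v ∈ l) : v ∈ G.verts := by
  obtain ⟨w, hw⟩ := List.exists_mem_zip_rotate_one_fst_eq hv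
  exact (G.wf _ (h.2.2 _ hw)).1

theorem induce (h : G.IsDicycle l) {S : Finset ℕ} (hS : ∀ v ∈ l, v ∈ S) :
    (G.induce S).IsDicycle l := by
  refine ⟨h.1, h.2.1, fun p hp => ?_⟩
  have hp1 := (List.of_mem_zip hp).1
  have hp2 := List.mem_rotate.1 (List.of_mem_zip hp).2
  have hG := G.wf p (h.2.2 p hp)
  exact Finset.mem_filter.2 ⟨h.2.2 p hp, Finset.mem_inter.2 ⟨hG.1, hS _ hp1⟩,
    Finset.mem_inter.2 ⟨hG.2.1, hS _ hp2⟩, hG.2.2⟩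

end IsDicycle

theorem isDicolouring_id (G : FDigraph) : G.IsDicolouring (G.verts.sup id + 1) id := by
  refine ⟨fun v hv => Nat.lt_succ_of_le (Finset.le_sup (f := id) hv), fun c ⟨l, hl, hc⟩ => ?_⟩
  obtain ⟨v, hv⟩ := List.exists_mem_of_ne_nil l hl.1
  obtain ⟨w, hw⟩ := List.exists_mem_zip_rotate_one_fst_eq hv
  have hvw : v = w :=
    (hc v hv).trans (hc w (List.mem_rotate.1 (List.of_mem_zip hw).2)).symm
  exact (G.wf _ (hl.2.2 _ hw)).2.2 hvw

theorem IsDicolouring.dichi_le {G : FDigraph} {m : ℕ} {φ : ℕ → ℕ} (h : G.IsDicolouring m φ) :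
    G.dichi ≤ m :=
  Nat.sInf_le ⟨φ, h⟩

theorem exists_isDicolouring_of_dichi_le {G : FDigraph} {m : ℕ} (h : G.dichi ≤ m) :
    ∃ φ, G.IsDicolouring m φ := by
  have hne : {n | ∃ φ, G.IsDicolouring n φ}.Nonempty := ⟨_, _, G.isDicolouring_id⟩
  obtain ⟨φ, hφ⟩ := Nat.sInf_mem hne
  exact ⟨φ, fun v hv => (hφ.1 v hv).trans_le h, hφ.2⟩

theorem IsDicolouring.add_mod {G : FDigraph} {m : ℕ} {φ : ℕ → ℕ} (h : G.IsDicolouring m φ)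
    (s : ℕ) : G.IsDicolouring m fun v => (φ v + s) % m := by
  refine ⟨fun v hv => Nat.mod_lt _ (Nat.zero_lt_of_lt (h.1 v hv)), fun c ⟨l, hl, hc⟩ => ?_⟩
  obtain ⟨v₀, hv₀⟩ := List.exists_mem_of_ne_nil l hl.1
  refine h.2 (φ v₀) ⟨l, hl, fun v hv => ?_⟩
  have hmod : φ v ≡ φ v₀ [MOD m] :=
    Nat.ModEq.add_right_cancel' s ((hc v hv).trans (hc v₀ hv₀).symm)
  exact hmod.eq_of_lt_of_lt (h.1 v (hl.mem_verts hv)) (h.1 v₀ (hl.mem_verts hv₀))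

theorem isDicolouring_piecewise {G : FDigraph} {m : ℕ} {V0 V1 : Finset ℕ}
    (hV : V0 ∪ V1 = G.verts) {φ0 φ1 : ℕ → ℕ} (h0 : (G.induce V0).IsDicolouring m φ0)
    (h1 : (G.induce V1).IsDicolouring m φ1) (hcross : ∀ a ∈ G.arcsBetween V0 V1, φ0 a.1 ≠ φ1 a.2) :
    G.IsDicolouring m (V0.piecewise φ0 φ1) := by
  refine ⟨fun v hv => ?_, fun c ⟨l, hl, hc⟩ => ?_⟩
  · by_cases hv0 : v ∈ V0
    · simpa [hv0] using h0.1 v (Finset.mem_inter.2 ⟨hv, hv0⟩)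
    · simpa [hv0] using h1.1 v (Finset.mem_inter.2 ⟨hv, mem_right_of_notMem_left hV hv hv0⟩)
  by_cases hall0 : ∀ v ∈ l, v ∈ V0
  · exact h0.2 c ⟨l, hl.induce hall0, fun v hv => by simpa [hall0 v hv] using hc v hv⟩
  by_cases hall1 : ∀ v ∈ l, v ∉ V0
  · refine h1.2 c ⟨l, hl.induce fun v hv => ?_, fun v hv => by simpa [hall1 v hv] using hc v hv⟩
    exact mem_right_of_notMem_left hV (hl.mem_verts hv) (hall1 v hv)
  push Not at hall0 hall1
  obtain ⟨u, hu, hu0⟩ := hall1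
  obtain ⟨w, hw, hw0⟩ := hall0
  obtain ⟨p, hp, hp1, hp2⟩ :=
    List.exists_mem_zip_rotate_one_fst_mem_snd_notMem (S := ↑V0) hu hu0 hw hw0
  have hp2l := List.mem_rotate.1 (List.of_mem_zip hp).2
  refine hcross p (Finset.mem_filter.2 ⟨hl.2.2 p hp, hp1,
    mem_right_of_notMem_left hV (hl.mem_verts hp2l) hp2⟩) ?_
  have hc1 := hc p.1 (List.of_mem_zip hp).1
  have hc2 := hc p.2 hp2l
  simp only [Set.mem_ofPred_eq, Finset.piecewise_eq_of_mem _ _ _ (Finset.mem_coe.1 hp1),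
    Finset.piecewise_eq_of_notMem _ _ _ (by simpa using hp2)] at hc1 hc2
  exact hc1.trans hc2.symm

theorem Dicritical.exists_isDicolouring_induce {G : FDigraph} {k : ℕ} (hG : G.Dicritical k)
    {S : Finset ℕ} {v : ℕ} (hv : v ∈ G.verts) (hvS : v ∉ S) :
    ∃ φ, (G.induce S).IsDicolouring (k - 1) φ := by
  refine exists_isDicolouring_of_dichi_le (hG.2 _ ⟨Finset.inter_subset_left,
    fun a ha => (Finset.mem_filter.1 ha).1⟩ fun hS => hvS ?_)
  have hv' : v ∈ (G.induce S).verts := by rw [hS]; exact hv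
  exact (Finset.mem_inter.1 hv').2

theorem Dicritical.le_card_arcsBetween {G : FDigraph} {k : ℕ} (hG : G.Dicritical k)
    {V0 V1 : Finset ℕ} (hV : V0 ∪ V1 = G.verts) (hdisj : Disjoint V0 V1) (h0 : V0.Nonempty)
    (h1 : V1.Nonempty) : k - 1 ≤ (G.arcsBetween V0 V1).card := by
  by_contra! hlt
  obtain ⟨v0, hv0⟩ := h0
  obtain ⟨v1, hv1⟩ := h1
  obtain ⟨φ0, hφ0⟩ := hG.exists_isDicolouring_induce (S := V0)
    (hV ▸ Finset.mem_union_right _ hv1) (Finset.disjoint_right.1 hdisj hv1)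
  obtain ⟨φ1, hφ1⟩ := hG.exists_isDicolouring_induce (S := V1)
    (hV ▸ Finset.mem_union_left _ hv0) (Finset.disjoint_left.1 hdisj hv0)
  obtain ⟨s, -, hs⟩ :=
    Nat.exists_lt_forall_add_mod_ne _ (fun a => φ0 a.1) (fun a => φ1 a.2) hlt
  have hle := (isDicolouring_piecewise hV hφ0 (hφ1.add_mod s)
    fun a ha => (hs a ha).symm).dichi_le
  have hk := hG.1
  omega

theorem stronglyConnected_removeArcs_of_card_lt {G : FDigraph} {A : Finset (ℕ × ℕ)}
    (h : ∀ V0 V1 : Finset ℕ, V0 ∪ V1 = G.verts → Disjoint V0 V1 → V0.Nonempty →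
      V1.Nonempty → A.card < (G.arcsBetween V0 V1).card) :
    (G.removeArcs A).StronglyConnected := by
  classical
  intro u hu v hv
  by_contra huv
  set reach := Relation.ReflTransGen fun a b => (a, b) ∈ (G.removeArcs A).arcs
  set R := G.verts.filter (reach u)
  have hcut : G.arcsBetween R (G.verts \ R) ⊆ A := by
    intro a ha
    simp only [arcsBetween, R, Finset.mem_filter, Finset.mem_sdiff] at ha
    obtain ⟨harc, ⟨-, hreach⟩, hv2, hnotR⟩ := ha
    by_contra haA
    exact hnotR ⟨hv2, hreach.tail (Finset.mem_sdiff.2 ⟨harc, haA⟩)⟩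
  have := h R (G.verts \ R) (Finset.union_sdiff_of_subset (Finset.filter_subset _ _))
    Finset.disjoint_sdiff ⟨u, Finset.mem_filter.2 ⟨hu, Relation.ReflTransGen.refl⟩⟩
    ⟨v, Finset.mem_sdiff.2 ⟨hv, fun hvR => huv (Finset.mem_filter.1 hvR).2⟩⟩
  exact (Finset.card_le_card hcut).not_gt this

end FDigraph

/-- a `k`-dicritical digraph is `(k-1)`-arc-connected; equivalently
every nontrivial vertex partition has at least `k-1` arcs across it. -/
theorem dicritical_arc_connected (k : ℕ) (hk : 2 ≤ k) (G : FDigraph)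
    (hG : G.Dicritical k) :
    (∀ A' ⊆ G.arcs, A'.card ≤ k - 2 → (G.removeArcs A').StronglyConnected) ∧
    (∀ V0 V1 : Finset ℕ, V0 ∪ V1 = G.verts → Disjoint V0 V1 →
      V0.Nonempty → V1.Nonempty →
      k - 1 ≤ (G.arcs.filter fun a => a.1 ∈ V0 ∧ a.2 ∈ V1).card) := by
  refine ⟨fun A' _ hA' => FDigraph.stronglyConnected_removeArcs_of_card_lt
    fun _ _ hV hdisj h0 h1 => ?_, fun _ _ => hG.le_card_arcsBetween⟩
  have := hG.le_card_arcsBetween hV hdisj h0 h1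
  omega
end

section
/- Let G be a digraph and let S ⊆ V(G) be such that the induced subdigraph G[S] is acyclic. Then χ⃗(G/S) ≥ χ⃗(G), where G/S is the digraph obtained from G by contracting S to a single vertex (the vertex set is (V(G) − S) ∪ {s*}, and there is an arc between two vertices of G/S whenever G has an arc between the corresponding sets of original vertices, loops being discarded). -/
namespace FDigraph

/-- Contraction of the set `S` to the single (new) vertex `s`: arcs are the
projections of arcs of `G`, loops being discarded. -/
def contract (G : FDigraph) (S : Finset ℕ) (s : ℕ) : FDigraph :=
  mk' ((G.verts \ S) ∪ {s})
    (G.arcs.image fun a => (if a.1 ∈ S then s else a.1, if a.2 ∈ S then s else a.2))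

end FDigraph

/-!
Pull a dicolouring of `G/S` back to `G` along the contraction map. If a colour class of `G`
contained a dicycle `C`, its image would be a monochromatic vertex set of `G/S` in which every
vertex has an out-neighbour: a vertex outside `S` keeps its successor on `C`, and the new vertex
`s` gets one because `C`, unable to stay inside the acyclic set `S`, leaves `S` along some arc.
A nonempty set in which every vertex has an out-neighbour contains a dicycle.
-/

namespace FDigraph

variable {G : FDigraph}

theorem IsDicycle.exists_arc_of_mem {l : List ℕ} (hl : G.IsDicycle l) {v : ℕ} (hv : v ∈ l) :
    ∃ w ∈ l, (v, w) ∈ G.arcs := by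
  obtain ⟨i, hi, rfl⟩ := List.mem_iff_getElem.mp hv
  have hi' : i < (l.zip (l.rotate 1)).length := by simpa using hi
  refine ⟨(l.rotate 1)[i]'(by simpa using hi), List.mem_rotate.mp (List.getElem_mem _), ?_⟩
  simpa [List.getElem_zip] using hl.2.2 _ (List.getElem_mem hi')

theorem AcyclicOn.mono {T T' : Set ℕ} (hT' : G.AcyclicOn T') (h : T ⊆ T') : G.AcyclicOn T :=
  fun ⟨l, hl, hlT⟩ => hT' ⟨l, hl, fun v hv => h (hlT v hv)⟩

theorem acyclicOn_of_subsingleton {T : Set ℕ} (hT : T.Subsingleton) : G.AcyclicOn T := by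
  rintro ⟨l, hl, hlT⟩
  obtain ⟨v, hv⟩ := List.exists_mem_of_ne_nil _ hl.1
  obtain ⟨w, hw, hvw⟩ := hl.exists_arc_of_mem hv
  exact (G.wf _ hvw).2.2 (hT (hlT v hv) (hlT w hw))

theorem exists_isDicolouring (G : FDigraph) : ∃ k φ, G.IsDicolouring k φ :=
  ⟨G.verts.sup id + 1, id, fun _ hv => Nat.lt_succ_of_le (Finset.le_sup (f := id) hv),
    fun _ => acyclicOn_of_subsingleton fun _ ha _ hb => ha.trans hb.symm⟩

theorem isDicycle_map_range {g : ℕ → ℕ} {n : ℕ} (hn : 0 < n) (hinj : Set.InjOn g (Set.Iio n))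
    (hper : g n = g 0) (harc : ∀ i < n, (g i, g (i + 1)) ∈ G.arcs) :
    G.IsDicycle ((List.range n).map g) := by
  refine ⟨by simpa using hn.ne', List.nodup_range.map_on fun i hi j hj => ?_, ?_⟩
  · exact hinj (by simpa using hi) (by simpa using hj)
  · intro p hp
    obtain ⟨i, hi, rfl⟩ := List.mem_iff_getElem.mp hp
    simp only [List.length_zip, List.length_rotate, List.length_map, List.length_range,
      min_self] at hi
    simp only [List.getElem_zip, List.getElem_rotate, List.getElem_map, List.getElem_range,
      List.length_map, List.length_range]
    rcases (Nat.succ_le_of_lt hi).lt_or_eq with hlt | heq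
    · simpa [Nat.mod_eq_of_lt hlt] using harc i hi
    · obtain rfl : i + 1 = n := heq
      simpa [hper] using harc i hi

/-- Following chosen out-neighbours inside `T` stays in the finite set `G.verts`, so it runs into
a periodic orbit, which is the cycle. -/
theorem not_acyclicOn_of_forall_exists_arc {T : Set ℕ} (hne : T.Nonempty)
    (hout : ∀ u ∈ T, ∃ v ∈ T, (u, v) ∈ G.arcs) : ¬ G.AcyclicOn T := by
  choose! σ hσT hσarc using hout
  obtain ⟨u, hu⟩ := hne
  have horbit : ∀ k, σ^[k] u ∈ T := fun k => (Set.MapsTo.iterate hσT k) hu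
  obtain ⟨a, b, hab, heq⟩ := Set.Finite.exists_lt_map_eq_of_forall_mem (f := (σ^[·] u))
    (fun k => (G.wf _ (hσarc _ (horbit k))).1) G.verts.finite_toSet
  set x := σ^[a] u
  have hper : Function.IsPeriodicPt σ (b - a) x := by
    simp only [Function.IsPeriodicPt, Function.IsFixedPt, x, ← Function.iterate_add_apply,
      Nat.sub_add_cancel hab.le]
    exact heq.symm
  refine fun hac => hac ⟨_, isDicycle_map_range (hper.minimalPeriod_pos (by omega))
    Function.iterate_injOn_Iio_minimalPeriod (by simp [Function.iterate_minimalPeriod])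
    fun i _ => ?_, ?_⟩
  · simpa [Function.iterate_succ_apply'] using hσarc _ ((Set.MapsTo.iterate hσT i) (horbit a))
  · simp only [List.mem_map, List.mem_range]
    rintro v ⟨i, -, rfl⟩
    exact (Set.MapsTo.iterate hσT i) (horbit a)

theorem IsDicycle.exists_arc_leaving {l : List ℕ} (hl : G.IsDicycle l) {T : Set ℕ}
    (hT : G.AcyclicOn T) (hmeet : ∃ u ∈ l, u ∈ T) :
    ∃ v ∈ l, v ∈ T ∧ ∃ w ∈ l, w ∉ T ∧ (v, w) ∈ G.arcs := by
  by_contra! hstay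
  refine not_acyclicOn_of_forall_exists_arc (T := {v | v ∈ l ∧ v ∈ T}) hmeet ?_
    (hT.mono fun _ hv => hv.2)
  rintro v ⟨hvl, hvT⟩
  obtain ⟨w, hwl, hvw⟩ := hl.exists_arc_of_mem hvl
  exact ⟨w, ⟨hwl, by_contra fun hwT => hstay v hvl hvT w hwl hwT hvw⟩, hvw⟩

def contractVert (S : Finset ℕ) (s v : ℕ) : ℕ := if v ∈ S then s else v

variable {S : Finset ℕ} {s : ℕ}

theorem contractVert_mem_verts {v : ℕ} (hv : v ∈ G.verts) :
    contractVert S s v ∈ (G.contract S s).verts := by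
  unfold contractVert
  split_ifs with hvS <;> simp [contract, mk', hv, hvS]

theorem contractVert_mem_arcs {u w : ℕ} (hs : s ∉ G.verts) (huw : (u, w) ∈ G.arcs)
    (hout : u ∉ S ∨ w ∉ S) :
    (contractVert S s u, contractVert S s w) ∈ (G.contract S s).arcs := by
  obtain ⟨hu, hw, hne⟩ := G.wf _ huw
  refine Finset.mem_filter.mpr ⟨Finset.mem_image.mpr ⟨(u, w), huw, rfl⟩,
    contractVert_mem_verts hu, contractVert_mem_verts hw, ?_⟩
  unfold contractVert
  split_ifs with huS hwS hwS
  · tauto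
  · exact fun h : s = w => hs (h ▸ hw)
  · exact fun h : u = s => hs (h ▸ hu)
  · exact hne

theorem IsDicolouring.comp_contractVert (hac : G.AcyclicOn S) (hs : s ∉ G.verts) {k : ℕ}
    {φ : ℕ → ℕ} (hφ : (G.contract S s).IsDicolouring k φ) :
    G.IsDicolouring k (φ ∘ contractVert S s) := by
  refine ⟨fun v hv => hφ.1 _ (contractVert_mem_verts hv), fun c ⟨l, hl, hlc⟩ => ?_⟩
  refine not_acyclicOn_of_forall_exists_arc (T := contractVert S s '' {v | v ∈ l})
    (Set.Nonempty.image _ (List.exists_mem_of_ne_nil _ hl.1)) ?_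
    ((hφ.2 c).mono ?_)
  · rintro _ ⟨v, hvl, rfl⟩
    by_cases hvS : v ∈ S
    · obtain ⟨u, hul, huS, w, hwl, hwS, huw⟩ := hl.exists_arc_leaving hac ⟨v, hvl, hvS⟩
      refine ⟨_, ⟨w, hwl, rfl⟩, ?_⟩
      have hsu : contractVert S s u = contractVert S s v := by
        simp [contractVert, Finset.mem_coe.mp huS, hvS]
      exact hsu ▸ contractVert_mem_arcs hs huw (Or.inr hwS)
    · obtain ⟨w, hwl, hvw⟩ := hl.exists_arc_of_mem hvl
      exact ⟨_, ⟨w, hwl, rfl⟩, contractVert_mem_arcs hs hvw (Or.inl hvS)⟩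
  · rintro _ ⟨v, hvl, rfl⟩
    exact hlc v hvl

end FDigraph

theorem contract_acyclic_general (G : FDigraph) (S : Finset ℕ)
    (hac : G.AcyclicOn ↑S) (s : ℕ) (hs : s ∉ G.verts) :
    G.dichi ≤ (G.contract S s).dichi := by
  obtain ⟨φ, hφ⟩ := Nat.sInf_mem (G.contract S s).exists_isDicolouring
  exact Nat.sInf_le ⟨_, hφ.comp_contractVert hac hs⟩

/-- contracting an acyclic set does not decrease the dichromatic
number. -/
theorem contract_acyclic (G : FDigraph) (S : Finset ℕ) (hS : S ⊆ G.verts)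
    (hac : G.AcyclicOn ↑S) (s : ℕ) (hs : s ∉ G.verts) :
    G.dichi ≤ (G.contract S s).dichi :=
  contract_acyclic_general G S hac s hs
end
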